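/- Let R be a commutative ring, let n ≥ 1, and let K = T(n,R) be the R-algebra of upper triangular n×n matrices over R. Then every R-algebra automorphism of K is inner: for every R-algebra automorphism φ of K there exists an invertible element u of K such that φ(A) = u·A·u⁻¹ for all A ∈ K. -/

import Mathlib

/-- The `T`-subalgebra of upper triangular `n × n` matrices over `R`. -/
def triangularSubalgebra (T R : Type*) [CommRing T] [Ring R] [Algebra T R] (n : ℕ) :
    Subalgebra T (Matrix (Fin n) (Fin n) R) where
  carrier := {A | ∀ ⦃i j : Fin n⦄, j < i → A i j = 0}
  add_mem' := fun {A B} hA hB i j hij => by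
    simp [Matrix.add_apply, hA hij, hB hij]
  mul_mem' := fun {A B} hA hB i j hij => by
    simp only [Matrix.mul_apply]
    refine Finset.sum_eq_zero fun k _ => ?_
    rcases lt_or_ge k i with h | h
    · rw [hA h, zero_mul]
    · rw [hB (lt_of_lt_of_le hij h), mul_zero]
  algebraMap_mem' := fun t i j hij => by
    simp [Matrix.algebraMap_matrix_apply, (ne_of_lt hij).symm]

/-- The set of strictly upper triangular matrices inside the triangular matrix algebra. -/
def strictlyUpper (T R : Type*) [CommRing T] [Ring R] [Algebra T R] (n : ℕ) :
    Set (triangularSubalgebra T R n) :=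
  {A | ∀ i j : Fin n, j ≤ i → (A : Matrix (Fin n) (Fin n) R) i j = 0}

/-- The entrywise action of an automorphism `α` of `R` on the triangular matrix algebra. -/
def entrywiseMap (T R : Type*) [CommRing T] [Ring R] [Algebra T R] (n : ℕ)
    (α : R ≃ₐ[T] R) (A : triangularSubalgebra T R n) : triangularSubalgebra T R n :=
  ⟨Matrix.of fun i j => α ((A : Matrix (Fin n) (Fin n) R) i j),
    fun i j hij => by simp [Matrix.of_apply, A.2 hij]⟩

/-!
The images `fᵢ = φ(E_ii)` of the diagonal matrix units form a complete family of orthogonal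
idempotents, and so do their diagonal parts `dᵢ`. The element `u = ∑ fᵢ dᵢ` has diagonal
`∑ dᵢ² = 1`, so it is invertible, and `u dᵢ = fᵢ u`; after conjugating by `u` we may assume that
every `φ(E_ii)` is diagonal. Comparing `φ(E_ii) K φ(E_jj)` with `E_ii K E_jj`, which is `0` for
`i > j` and `R E_ii` for `i = j`, shows that `φ(E_ii) = E_ii`; since `R` may have nontrivial
idempotents this takes an induction over the columns. Then `φ` multiplies each matrix unit `E_pq`
by a unit `c_pq` with `c_pq c_qr = c_pr`, and so does conjugation by `diag(c_0i)⁻¹`.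
-/

open Matrix

theorem OrthogonalIdempotents.sum_mul_mul_eq_mul_sum_mul {A ι : Type*} [Semiring A] [Fintype ι]
    {f d : ι → A} (hf : OrthogonalIdempotents f) (hd : OrthogonalIdempotents d) (i : ι) :
    (∑ k, f k * d k) * d i = f i * ∑ k, f k * d k := by
  classical
  simp_rw [Finset.sum_mul, Finset.mul_sum, mul_assoc, hd.mul_eq, ← mul_assoc, hf.mul_eq]
  simp [mul_ite, ite_mul]

-- Row `i` of `δ` will be the diagonal of `φ(E_ii)`.
theorem Matrix.eq_one_of_sum_eq_one_of_mul_eq_zero {ι R : Type*} [Fintype ι] [LinearOrder ι]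
    [Semiring R] (δ : Matrix ι ι R) (hsum : ∀ j, ∑ i, δ i j = 1)
    (hrow : ∀ i p q, p < q → δ i p * δ i q = 0)
    (hmono : ∀ i i' p q, i' < i → p ≤ q → δ i p * δ i' q = 0)
    (hfaith : ∀ i r, (∀ q, r * δ i q = 0) → r = 0) : δ = 1 := by
  have diag_of_offdiag : ∀ j, (∀ i ≠ j, δ i j = 0) → δ j j = 1 := fun j h => by
    rw [← hsum j, eq_comm, Finset.sum_eq_single j (fun i _ hi => h i hi) (by simp)]
  have offdiag : ∀ j, ∀ i ≠ j, δ i j = 0 := by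
    intro j
    induction j using WellFoundedLT.induction with
    | _ j ih =>
    intro i hij
    rcases hij.lt_or_gt with hij | hji
    · simpa [diag_of_offdiag i (ih i hij)] using hrow i i j hij
    · refine hfaith j _ fun q => ?_
      rcases le_or_gt j q with hjq | hqj
      · exact hmono i j j q hji hjq
      · rw [ih q hqj j hqj.ne', mul_zero]
  ext i j
  rcases eq_or_ne i j with rfl | hij
  · rw [one_apply_eq, diag_of_offdiag i (offdiag i)]
  · rw [one_apply_ne hij, offdiag j i hij]

namespace triangularSubalgebra

variable {R : Type*} [CommRing R] {n : ℕ}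

local notation "𝕋" => triangularSubalgebra R R n

def single (i j : Fin n) (h : i ≤ j) : 𝕋 :=
  ⟨Matrix.single i j 1, blockTriangular_single (b := id) h 1⟩

@[simp]
theorem coe_single {i j : Fin n} (h : i ≤ j) :
    (single i j h : 𝕋).1 = Matrix.single i j (1 : R) :=
  rfl

theorem smul_single_inj {i j : Fin n} (h : i ≤ j) {r s : R} :
    r • (single i j h : 𝕋) = s • single i j h ↔ r = s :=
  ⟨fun H => by simpa using congrArg (fun A : 𝕋 => A.1 i j) H, fun H => H ▸ rfl⟩

theorem single_mul_single {i j k : Fin n} (hij : i ≤ j) (hjk : j ≤ k) :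
    single i j hij * single j k hjk = (single i k (hij.trans hjk) : 𝕋) :=
  Subtype.ext (by simp)

theorem single_mul_mul_single_of_le (A : 𝕋) {i j : Fin n} (h : i ≤ j) :
    single i i le_rfl * A * single j j le_rfl = A.1 i j • single i j h :=
  Subtype.ext (by ext; simp [Matrix.single_apply])

theorem single_mul_mul_single_of_lt (A : 𝕋) {i j : Fin n} (h : j < i) :
    single i i le_rfl * A * single j j le_rfl = 0 :=
  Subtype.ext (by simp [A.2 h])

def diagHom : 𝕋 →ₐ[R] (Fin n → R) where
  toFun A i := A.1 i i
  map_one' := funext fun i => one_apply_eq i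
  map_mul' A B := funext fun i => by
    refine (Matrix.mul_apply ..).trans (Finset.sum_eq_single i (fun k _ hk => ?_) (by simp))
    rcases hk.lt_or_gt with hki | hik
    · rw [A.2 hki, zero_mul]
    · rw [B.2 hik, mul_zero]
  map_zero' := rfl
  map_add' _ _ := rfl
  commutes' r := funext fun i => by simp [algebraMap_matrix_apply]

@[simp]
theorem diagHom_apply (A : 𝕋) (i : Fin n) : diagHom A i = A.1 i i :=
  rfl

def diagonalHom : (Fin n → R) →ₐ[R] 𝕋 :=
  (diagonalAlgHom R).codRestrict 𝕋 fun v => blockTriangular_diagonal (b := id) v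

@[simp]
theorem coe_diagonalHom (v : Fin n → R) : (diagonalHom v : 𝕋).1 = diagonal v :=
  rfl

@[simp]
theorem diagHom_diagonalHom (v : Fin n → R) : diagHom (diagonalHom v : 𝕋) = v :=
  funext fun _ => diagonal_apply_eq _ _

theorem diagonalHom_pi_single (i : Fin n) :
    diagonalHom (Pi.single i 1) = (single i i le_rfl : 𝕋) :=
  Subtype.ext (diagonal_single i 1)

theorem diagonalHom_mul_single_mul_diagonalHom (v w : Fin n → R) {p q : Fin n} (h : p ≤ q) :
    diagonalHom v * single p q h * diagonalHom w = (v p * w q) • (single p q h : 𝕋) :=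
  Subtype.ext <| by
    ext a b
    by_cases hab : p = a ∧ q = b
    · obtain ⟨rfl, rfl⟩ := hab
      simp
    · simp [hab]

theorem completeOrthogonalIdempotents_single :
    CompleteOrthogonalIdempotents fun i : Fin n => (single i i le_rfl : 𝕋) := by
  simpa [Function.comp_def, diagonalHom_pi_single] using
    (CompleteOrthogonalIdempotents.single fun _ : Fin n => R).map diagonalHom.toRingHom

theorem linearMap_ext {M : Type*} [AddCommMonoid M] [Module R M] {f g : 𝕋 →ₗ[R] M}
    (h : ∀ i j (hij : i ≤ j), f (single i j hij) = g (single i j hij)) : f = g := by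
  ext A
  have hA : A = ∑ i, ∑ j, single i i le_rfl * A * single j j le_rfl := by
    simp_rw [← Finset.mul_sum, ← Finset.sum_mul, completeOrthogonalIdempotents_single.complete,
      one_mul, mul_one]
  rw [hA, map_sum, map_sum]
  refine Finset.sum_congr rfl fun i _ => ?_
  rw [map_sum, map_sum]
  refine Finset.sum_congr rfl fun j _ => ?_
  rcases le_or_gt i j with hij | hji
  · rw [single_mul_mul_single_of_le A hij, map_smul, map_smul, h]
  · rw [single_mul_mul_single_of_lt A hji, map_zero, map_zero]

theorem isUnit_diagHom_iff {A : 𝕋} : IsUnit (diagHom A) ↔ IsUnit A := by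
  refine ⟨fun hA => ?_, fun hA => hA.map diagHom⟩
  have hdet : IsUnit A.1.det := by
    rw [det_of_isUpperTriangular A.2]
    exact IsUnit.prod_univ_iff.mpr (Pi.isUnit_iff.mp hA)
  have hinv : A.1⁻¹ ∈ 𝕋 := by
    have := A.1.invertibleOfIsUnitDet hdet
    exact blockTriangular_inv_of_blockTriangular A.2
  exact ⟨⟨A, ⟨_, hinv⟩, Subtype.ext (mul_nonsing_inv _ hdet),
    Subtype.ext (nonsing_inv_mul _ hdet)⟩, rfl⟩

theorem exists_units_conj_eq_diagonalHom {f : Fin n → 𝕋}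
    (hf : CompleteOrthogonalIdempotents f) :
    ∃ u : 𝕋ˣ, ∀ i, ↑u⁻¹ * f i * u = diagonalHom (diagHom (f i)) := by
  set d := fun i => diagonalHom (diagHom (f i))
  have hd : CompleteOrthogonalIdempotents d := hf.map (diagonalHom.comp diagHom).toRingHom
  have hdiag : diagHom (∑ i, f i * d i) = 1 := by
    simp only [map_sum, map_mul, d, diagHom_diagonalHom]
    simp only [← map_mul, (hf.idem _).eq, ← map_sum, hf.complete, map_one]
  obtain ⟨u, hu⟩ := isUnit_diagHom_iff.mp (hdiag ▸ isUnit_one)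
  refine ⟨u, fun i => ?_⟩
  rw [mul_assoc, hu, ← hf.sum_mul_mul_eq_mul_sum_mul hd.toOrthogonalIdempotents i, ← hu,
    ← mul_assoc, Units.inv_mul, one_mul]

theorem map_single_self_eq_of_exists_diagonalHom (ψ : 𝕋 ≃ₐ[R] 𝕋)
    (hψ : ∀ i, ∃ v, ψ (single i i le_rfl) = diagonalHom v) (i : Fin n) :
    ψ (single i i le_rfl) = single i i le_rfl := by
  set δ : Matrix (Fin n) (Fin n) R := fun i => diagHom (ψ (single i i le_rfl))
  have hδ : ∀ i, ψ (single i i le_rfl) = diagonalHom (δ i) := fun i => by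
    obtain ⟨v, hv⟩ := hψ i
    simp only [δ, hv, diagHom_diagonalHom]
  have sandwich : ∀ i i' p q (h : p ≤ q), δ i p * δ i' q =
      (ψ (single i i le_rfl * ψ.symm (single p q h) * single i' i' le_rfl)).1 p q := by
    intro i i' p q h
    simp [hδ, diagonalHom_mul_single_mul_diagonalHom]
  suffices δ = 1 by
    rw [hδ, this, ← diagonalHom_pi_single]
    exact congrArg diagonalHom (funext fun j => one_eq_pi_single)
  refine δ.eq_one_of_sum_eq_one_of_mul_eq_zero (fun j => ?_) (fun i p q hpq => ?_)
    (fun i i' p q hi hpq => ?_) (fun i r hr => ?_)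
  · have := congrArg diagHom (completeOrthogonalIdempotents_single.map ψ.toRingHom).complete
    simpa [δ, Matrix.sum_apply] using congrFun this j
  -- `E_ii K E_ii = R E_ii` consists of diagonal matrices
  · rw [sandwich i i p q hpq.le, single_mul_mul_single_of_le _ le_rfl, map_smul, hδ]
    simp [hpq.ne]
  -- `E_ii K E_i'i' = 0` for `i' < i`
  · rw [sandwich i i' p q hpq, single_mul_mul_single_of_lt _ hi, map_zero]
    rfl
  -- `r • E_ii ≠ 0` for `r ≠ 0`, and `ψ` is injective
  · have hψr : ψ (r • single i i le_rfl) = 0 := by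
      have : r • δ i = 0 := funext hr
      rw [map_smul, hδ, ← map_smul, this, map_zero]
    have := congrArg (fun A : 𝕋 => A.1 i i) (ψ.injective (hψr.trans (map_zero ψ).symm))
    simpa using this

theorem map_single_eq_smul_single (ψ : 𝕋 →ₐ[R] 𝕋)
    (hψ : ∀ i, ψ (single i i le_rfl) = single i i le_rfl) {p q : Fin n} (h : p ≤ q) :
    ψ (single p q h) = (ψ (single p q h)).1 p q • (single p q h : 𝕋) := by
  have hE : single p p le_rfl * single p q h * single q q le_rfl = (single p q h : 𝕋) := by
    simp [single_mul_mul_single_of_le _ h]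
  calc ψ (single p q h) = ψ (single p p le_rfl * single p q h * single q q le_rfl) := by rw [hE]
    _ = _ := by rw [map_mul, map_mul, hψ, hψ, single_mul_mul_single_of_le _ h]

theorem exists_units_conj_of_map_single_eq_smul (ψ : 𝕋 →ₗ[R] 𝕋)
    (c : ∀ p q : Fin n, p ≤ q → R)
    (hc : ∀ p q h, ψ (single p q h) = c p q h • single p q h)
    (hc_mul : ∀ p q r (hpq : p ≤ q) (hqr : q ≤ r),
      c p q hpq * c q r hqr = c p r (hpq.trans hqr))
    (hc_unit : ∀ p q h, IsUnit (c p q h)) :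
    ∃ u : 𝕋ˣ, ∀ A, ψ A = u * A * ↑u⁻¹ := by
  let t : Fin n → Rˣ := fun i => (hc_unit ⟨0, i.pos⟩ i (Nat.zero_le _)).unit
  have ht : ∀ p q (h : p ≤ q), (↑(t p)⁻¹ : R) * t q = c p q h := fun p q h => by
    rw [Units.inv_mul_eq_iff_eq_mul]
    exact (hc_mul _ p q _ h).symm
  let u : 𝕋ˣ :=
    Units.map (diagonalHom : (Fin n → R) →ₐ[R] 𝕋).toMonoidHom (MulEquiv.piUnits.symm t⁻¹)
  refine ⟨u, fun A => ?_⟩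
  have : ψ = (MulSemiringAction.toAlgEquiv R 𝕋 (ConjAct.toConjAct u)).toLinearMap :=
    linearMap_ext fun p q h => by
      simp [ConjAct.units_smul_def, u, hc, diagonalHom_mul_single_mul_diagonalHom]
      rw [ht]
  simpa [ConjAct.units_smul_def] using LinearMap.congr_fun this A

theorem exists_units_conj_of_map_single_self (ψ : 𝕋 ≃ₐ[R] 𝕋)
    (hψ : ∀ i, ψ (single i i le_rfl) = single i i le_rfl) :
    ∃ u : 𝕋ˣ, ∀ A, ψ A = u * A * ↑u⁻¹ := by
  have hψ_symm : ∀ i, ψ.symm (single i i le_rfl) = single i i le_rfl := fun i =>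
    ψ.symm_apply_eq.mpr (hψ i).symm
  set c : ∀ p q : Fin n, p ≤ q → R := fun p q h => (ψ (single p q h)).1 p q
  have hc : ∀ p q h, ψ (single p q h) = c p q h • single p q h := fun p q h =>
    map_single_eq_smul_single ψ.toAlgHom hψ h
  refine exists_units_conj_of_map_single_eq_smul ψ.toLinearMap c hc (fun p q r hpq hqr => ?_)
    (fun p q h => ?_)
  · have := congrArg ψ (single_mul_single hpq hqr)
    rwa [map_mul, hc, hc, hc, smul_mul_smul, single_mul_single, smul_single_inj] at this
  · have hsymm := map_single_eq_smul_single ψ.symm.toAlgHom hψ_symm h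
    rw [AlgEquiv.coe_toAlgHom] at hsymm
    have : (1 : R) • (single p q h : 𝕋) =
        ((ψ.symm (single p q h)).1 p q * c p q h) • single p q h := by
      rw [one_smul, ← smul_smul, ← hc, ← map_smul, ← hsymm, ψ.apply_symm_apply]
    exact IsUnit.of_mul_eq_one_right _ ((smul_single_inj h).mp this).symm

end triangularSubalgebra

theorem stmt13_general (R : Type*) [CommRing R] (n : ℕ)
    (φ : triangularSubalgebra R R n ≃ₐ[R] triangularSubalgebra R R n) :
    ∃ u : (triangularSubalgebra R R n)ˣ,
      ∀ A : triangularSubalgebra R R n, φ A = ↑u * A * ↑u⁻¹ := by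
  open triangularSubalgebra in
  obtain ⟨u, hu⟩ := exists_units_conj_eq_diagonalHom
    (completeOrthogonalIdempotents_single.map φ.toRingHom)
  let ψ := φ.trans (MulSemiringAction.toAlgEquiv R _ (ConjAct.toConjAct u⁻¹))
  have hψ : ∀ A, ψ A = ↑u⁻¹ * φ A * u := by simp [ψ, ConjAct.units_smul_def]
  obtain ⟨v, hv⟩ := exists_units_conj_of_map_single_self ψ
    (map_single_self_eq_of_exists_diagonalHom ψ fun i => ⟨_, by rw [hψ]; exact hu i⟩)
  refine ⟨u * v, fun A => ?_⟩
  calc φ A = u * ψ A * ↑u⁻¹ := by simp [hψ, mul_assoc]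
    _ = _ := by simp [hv, mul_assoc]

/-- If `R` is a commutative ring, every `R`-algebra automorphism of the upper triangular
matrix algebra `T(n,R)` is inner. -/
theorem stmt13 (R : Type*) [CommRing R] (n : ℕ) (hn : 1 ≤ n)
    (φ : triangularSubalgebra R R n ≃ₐ[R] triangularSubalgebra R R n) :
    ∃ u : (triangularSubalgebra R R n)ˣ,
      ∀ A : triangularSubalgebra R R n, φ A = ↑u * A * ↑u⁻¹ :=
  stmt13_general R n φ
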